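/- Let U be a Beta(a, b) random variable and W an independent Gamma(a+b, β) random variable. Then W·U and W·(1−U) are independent, with distributions Gamma(a, β) and Gamma(b, β) respectively. -/

import Mathlib

/-!
The map `T (u, w) = (w u, w (1 - u))` is a diffeomorphism of `(0,1) × (0,∞)` onto `(0,∞)²`
with Jacobian determinant `w`, and the densities satisfy
`B(a,b)(u) · Γ(a+b,β)(w) = w · Γ(a,β)(w u) · Γ(b,β)(w (1 - u))`.
So the change of variables formula shows that `T` pushes `Beta(a,b) ⊗ Gamma(a+b,β)` forward to
`Gamma(a,β) ⊗ Gamma(b,β)`. As `(W U, W (1 - U)) = T (U, W)` and the law of `(U, W)` is that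
product by independence, the joint law of `(W U, W (1 - U))` is a product of probability
measures, which gives both the independence and the marginals.
-/

open MeasureTheory ProbabilityTheory

/-- The density of the Beta(a, b) distribution on (0,1). -/
noncomputable def betaPDFReal (a b u : ℝ) : ℝ :=
  if 0 < u ∧ u < 1 then
    Real.Gamma (a + b) / (Real.Gamma a * Real.Gamma b) * u ^ (a - 1) * (1 - u) ^ (b - 1)
  else 0

/-- The Beta(a, b) measure on ℝ. -/
noncomputable def betaMeasure (a b : ℝ) : Measure ℝ :=
  volume.withDensity fun u => ENNReal.ofReal (_root_.betaPDFReal a b u)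

open Real Set
open scoped ENNReal

theorem withDensity_eq_restrict_withDensity {α : Type*} [MeasurableSpace α] {μ : Measure α}
    {s : Set α} {f : α → ℝ≥0∞} (hs : MeasurableSet s) (hf : ∀ᵐ x ∂μ, x ∉ s → f x = 0) :
    μ.withDensity f = (μ.restrict s).withDensity f := by
  rw [← withDensity_indicator hs]
  refine withDensity_congr_ae ?_
  filter_upwards [hf] with x hx
  by_cases hxs : x ∈ s <;> simp [hxs, hx]

theorem map_restrict_withDensity_of_injOn {E : Type*} [NormedAddCommGroup E] [NormedSpace ℝ E]
    [FiniteDimensional ℝ E] [MeasurableSpace E] [BorelSpace E] (μ : Measure E)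
    [μ.IsAddHaarMeasure] {f : E → E} {f' : E → E →L[ℝ] E} {s : Set E} {g h : E → ℝ≥0∞}
    (hf : Measurable f) (hs : MeasurableSet s) (hf' : ∀ x ∈ s, HasFDerivWithinAt f (f' x) s x)
    (hinj : InjOn f s) (hgh : ∀ x ∈ s, g x = ENNReal.ofReal |(f' x).det| * h (f x)) :
    ((μ.restrict s).withDensity g).map f = (μ.restrict (f '' s)).withDensity h := by
  ext A hA
  have hsA : MeasurableSet (s ∩ f ⁻¹' A) := hs.inter (hf hA)
  rw [Measure.map_apply hf hA, withDensity_apply _ (hf hA), withDensity_apply _ hA,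
    Measure.restrict_restrict (hf hA), Measure.restrict_restrict hA, inter_comm (f ⁻¹' A),
    inter_comm A, ← image_inter_preimage, lintegral_image_eq_lintegral_abs_det_fderiv_mul μ hsA
      (fun x hx => (hf' x hx.1).mono inter_subset_left) (hinj.mono inter_subset_left)]
  exact setLIntegral_congr_fun hsA fun x hx => hgh x hx.1

theorem betaMeasure_eq (a b : ℝ) :
    _root_.betaMeasure a b = ProbabilityTheory.betaMeasure a b := by
  have hpdf : _root_.betaPDFReal a b = ProbabilityTheory.betaPDFReal a b := by
    ext u
    simp only [_root_.betaPDFReal, ProbabilityTheory.betaPDFReal, beta, one_div_div]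
  rw [_root_.betaMeasure, hpdf]
  rfl

theorem betaMeasure_eq_restrict_withDensity (a b : ℝ) :
    ProbabilityTheory.betaMeasure a b = (volume.restrict (Ioo 0 1)).withDensity (betaPDF a b) :=
  withDensity_eq_restrict_withDensity measurableSet_Ioo <|
    ae_of_all _ fun u (hu : ¬(0 < u ∧ u < 1)) => by rw [betaPDF_eq, if_neg hu, ENNReal.ofReal_zero]

-- Only almost everywhere, since `gammaPDF 1 r 0 = ENNReal.ofReal r`.
theorem gammaMeasure_eq_restrict_withDensity (a r : ℝ) :
    gammaMeasure a r = (volume.restrict (Ioi 0)).withDensity (gammaPDF a r) := by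
  refine withDensity_eq_restrict_withDensity measurableSet_Ioi ?_
  filter_upwards [compl_mem_ae_iff.mpr (measure_singleton (0 : ℝ))] with x (hx : x ≠ 0) hx0
  exact gammaPDF_of_neg (lt_of_le_of_ne (not_lt.mp hx0) hx)

def betaGammaMap (p : ℝ × ℝ) : ℝ × ℝ := (p.2 * p.1, p.2 * (1 - p.1))

noncomputable def betaGammaMapDeriv (p : ℝ × ℝ) : ℝ × ℝ →L[ℝ] ℝ × ℝ :=
  LinearMap.toContinuousLinearMap <| Matrix.toLin (Module.Basis.finTwoProd ℝ)
    (Module.Basis.finTwoProd ℝ) !![p.2, p.1; -p.2, 1 - p.1]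

theorem measurable_betaGammaMap : Measurable betaGammaMap := by
  unfold betaGammaMap; fun_prop

theorem hasFDerivAt_betaGammaMap (p : ℝ × ℝ) :
    HasFDerivAt betaGammaMap (betaGammaMapDeriv p) p := by
  rw [betaGammaMapDeriv, Matrix.toLin_finTwoProd_toContinuousLinearMap]
  have hu : HasFDerivAt (fun q : ℝ × ℝ => q.1) (ContinuousLinearMap.fst ℝ ℝ ℝ) p :=
    hasFDerivAt_fst
  have hw : HasFDerivAt (fun q : ℝ × ℝ => q.2) (ContinuousLinearMap.snd ℝ ℝ ℝ) p :=
    hasFDerivAt_snd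
  refine ((hw.mul hu).prodMk (hw.mul (hu.const_sub 1))).congr_fderiv ?_
  ext <;> simp

theorem det_betaGammaMapDeriv (p : ℝ × ℝ) : (betaGammaMapDeriv p).det = p.2 := by
  simp only [betaGammaMapDeriv, LinearMap.det_toContinuousLinearMap, LinearMap.det_toLin,
    Matrix.det_fin_two_of]
  ring

theorem injOn_betaGammaMap : InjOn betaGammaMap (Ioo 0 1 ×ˢ Ioi 0) := by
  rintro ⟨u, w⟩ ⟨-, hw : 0 < w⟩ ⟨u', w'⟩ - h
  simp only [betaGammaMap, Prod.mk.injEq] at h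
  obtain ⟨h₁, h₂⟩ := h
  obtain rfl : w = w' := by linarith
  simp [mul_left_cancel₀ hw.ne' h₁]

theorem image_betaGammaMap : betaGammaMap '' (Ioo 0 1 ×ˢ Ioi 0) = Ioi 0 ×ˢ Ioi 0 := by
  ext ⟨x, y⟩
  constructor
  · rintro ⟨⟨u, w⟩, ⟨⟨hu₀, hu₁⟩, hw : 0 < w⟩, h⟩
    simp only [betaGammaMap, Prod.mk.injEq] at h
    obtain ⟨rfl, rfl⟩ := h
    exact ⟨mul_pos hw hu₀, mul_pos hw (sub_pos.mpr hu₁)⟩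
  · rintro ⟨hx : 0 < x, hy : 0 < y⟩
    refine ⟨(x / (x + y), x + y), ⟨⟨by positivity, ?_⟩, mem_Ioi.mpr (by positivity)⟩, ?_⟩
    · rw [div_lt_one (by positivity)]; linarith
    · simp only [betaGammaMap, Prod.mk.injEq]
      constructor <;> field_simp; ring

theorem betaPDFReal_mul_gammaPDFReal {a b β : ℝ} (ha : 0 < a) (hb : 0 < b) (hβ : 0 < β)
    {u w : ℝ} (hu₀ : 0 < u) (hu₁ : u < 1) (hw : 0 < w) :
    ProbabilityTheory.betaPDFReal a b u * gammaPDFReal (a + b) β w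
      = w * (gammaPDFReal a β (w * u) * gammaPDFReal b β (w * (1 - u))) := by
  have hv : 0 < 1 - u := sub_pos.mpr hu₁
  rw [ProbabilityTheory.betaPDFReal, if_pos ⟨hu₀, hu₁⟩, gammaPDFReal, if_pos hw.le, gammaPDFReal,
    if_pos (mul_pos hw hu₀).le, gammaPDFReal, if_pos (mul_pos hw hv).le, beta]
  have := Gamma_pos_of_pos ha
  have := Gamma_pos_of_pos hb
  have := Gamma_pos_of_pos (add_pos ha hb)
  rw [mul_rpow hw.le hu₀.le, mul_rpow hw.le hv.le, rpow_add hβ,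
    show a + b - 1 = (a - 1) + ((b - 1) + 1) by ring, rpow_add hw, rpow_add hw, rpow_one,
    show -(β * w) = -(β * (w * u)) + -(β * (w * (1 - u))) by ring, exp_add]
  field_simp

theorem map_betaGammaMap_betaMeasure_prod_gammaMeasure {a b β : ℝ} (ha : 0 < a) (hb : 0 < b)
    (hβ : 0 < β) :
    ((ProbabilityTheory.betaMeasure a b).prod (gammaMeasure (a + b) β)).map betaGammaMap
      = (gammaMeasure a β).prod (gammaMeasure b β) := by
  have hf : Measurable (betaPDF a b) := (measurable_betaPDFReal a b).ennreal_ofReal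
  have hg (c : ℝ) : Measurable (gammaPDF c β) := (measurable_gammaPDFReal c β).ennreal_ofReal
  rw [betaMeasure_eq_restrict_withDensity, gammaMeasure_eq_restrict_withDensity (a + b),
    gammaMeasure_eq_restrict_withDensity a, gammaMeasure_eq_restrict_withDensity b,
    prod_withDensity hf (hg _), prod_withDensity (hg a) (hg b),
    Measure.prod_restrict, Measure.prod_restrict, ← Measure.volume_eq_prod, ← image_betaGammaMap]
  refine map_restrict_withDensity_of_injOn volume measurable_betaGammaMap
    (measurableSet_Ioo.prod measurableSet_Ioi)
    (fun p _ => (hasFDerivAt_betaGammaMap p).hasFDerivWithinAt) injOn_betaGammaMap ?_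
  rintro ⟨u, w⟩ ⟨⟨hu₀, hu₁⟩, hw : 0 < w⟩
  rw [det_betaGammaMapDeriv, abs_of_pos hw, betaPDF, gammaPDF, betaGammaMap, gammaPDF, gammaPDF,
    ← ENNReal.ofReal_mul (betaPDFReal_pos hu₀ hu₁ ha hb).le,
    ← ENNReal.ofReal_mul (gammaPDFReal_nonneg ha hβ _), ← ENNReal.ofReal_mul hw.le,
    betaPDFReal_mul_gammaPDFReal ha hb hβ hu₀ hu₁ hw]

theorem indepFun_and_map_eq_of_map_prod_eq_prod {Ω α γ : Type*} [MeasurableSpace Ω]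
    [MeasurableSpace α] [MeasurableSpace γ] {μ : Measure Ω} {X : Ω → α} {Y : Ω → γ}
    (hX : Measurable X) (hY : Measurable Y) {ν₁ : Measure α} {ν₂ : Measure γ}
    [IsProbabilityMeasure ν₁] [IsProbabilityMeasure ν₂]
    (h : μ.map (fun ω => (X ω, Y ω)) = ν₁.prod ν₂) :
    IndepFun X Y μ ∧ μ.map X = ν₁ ∧ μ.map Y = ν₂ := by
  have hXY : Measurable fun ω => (X ω, Y ω) := hX.prodMk hY
  have hX' : μ.map X = ν₁ := by
    rw [show X = Prod.fst ∘ fun ω => (X ω, Y ω) from rfl, ← Measure.map_map measurable_fst hXY,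
      h, Measure.map_fst_prod, measure_univ, one_smul]
  have hY' : μ.map Y = ν₂ := by
    rw [show Y = Prod.snd ∘ fun ω => (X ω, Y ω) from rfl, ← Measure.map_map measurable_snd hXY,
      h, Measure.map_snd_prod, measure_univ, one_smul]
  refine ⟨?_, hX', hY'⟩
  rw [indepFun_iff_map_prod_eq_prod_map_map' hX.aemeasurable hY.aemeasurable
    (hX' ▸ inferInstance) (hY' ▸ inferInstance), hX', hY', h]

/-- Beta–gamma algebra: if `U ~ Beta(a, b)` and `W ~ Gamma(a+b, β)` are independent,
then `W·U` and `W·(1−U)` are independent with distributions `Gamma(a, β)` and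
`Gamma(b, β)` respectively. -/
theorem beta_gamma_algebra {Ω : Type*} [MeasurableSpace Ω]
    (μ : Measure Ω) [IsProbabilityMeasure μ]
    (a b β : ℝ) (ha : 0 < a) (hb : 0 < b) (hβ : 0 < β)
    (U W : Ω → ℝ) (hUm : Measurable U) (hWm : Measurable W)
    (hU : μ.map U = _root_.betaMeasure a b)
    (hW : μ.map W = gammaMeasure (a + b) β)
    (hind : IndepFun U W μ) :
    IndepFun (fun ω => W ω * U ω) (fun ω => W ω * (1 - U ω)) μ ∧
      μ.map (fun ω => W ω * U ω) = gammaMeasure a β ∧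
      μ.map (fun ω => W ω * (1 - U ω)) = gammaMeasure b β := by
  have := isProbabilityMeasure_gammaMeasure ha hβ
  have := isProbabilityMeasure_gammaMeasure hb hβ
  have hUW : μ.map (fun ω => (U ω, W ω))
      = (ProbabilityTheory.betaMeasure a b).prod (gammaMeasure (a + b) β) := by
    rw [hind.map_prod_eq_prod_map_map hUm.aemeasurable hWm.aemeasurable, hU, hW, betaMeasure_eq]
  refine indepFun_and_map_eq_of_map_prod_eq_prod (hWm.mul hUm)
    (hWm.mul (measurable_const.sub hUm)) ?_
  rw [← map_betaGammaMap_betaMeasure_prod_gammaMeasure ha hb hβ, ← hUW,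
    Measure.map_map measurable_betaGammaMap (hUm.prodMk hWm)]
  rfl
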